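/- arXiv:2509.07345 — 6 statements merged into one kernel-verified Lean document; each statement's English description precedes it below -/
import Mathlib

section
/- Let n be a positive integer, let lo, hi ∈ ℝⁿ with lo ≤ hi componentwise, and let x, x_e ∈ ℝⁿ satisfy lo ≤ x ≤ hi and lo ≤ x_e ≤ hi componentwise. Then for every u ∈ ℝⁿ, ∑_{i=1}^n (x_i − x_{e,i}) · [u_i]_{x_i − lo_i}^{hi_i − x_i} ≤ ∑_{i=1}^n (x_i − x_{e,i}) · u_i. (Paper's Lemma 4, inequality (7a).) -/
/-- The projection operator `[u]_{x - lo}^{hi - x}`: it equals `0` if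
(`x = lo` and `u ≤ 0`) or (`x = hi` and `u ≥ 0`), and equals `u` otherwise. -/
noncomputable def proj (lo hi x u : ℝ) : ℝ :=
  if (x = lo ∧ u ≤ 0) ∨ (x = hi ∧ u ≥ 0) then 0 else u

/-- Lemma 4, inequality (7a): for `lo ≤ x, x_e ≤ hi` componentwise,
`∑ i (x i - x_e i) * [u i]_{x i - lo i}^{hi i - x i} ≤ ∑ i (x i - x_e i) * u i`. -/
theorem stmt0 (n : ℕ) (hn : 0 < n) (lo hi x xe : Fin n → ℝ)
    (hlohi : ∀ i, lo i ≤ hi i)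
    (hx : ∀ i, lo i ≤ x i ∧ x i ≤ hi i)
    (hxe : ∀ i, lo i ≤ xe i ∧ xe i ≤ hi i)
    (u : Fin n → ℝ) :
    ∑ i, (x i - xe i) * proj (lo i) (hi i) (x i) (u i)
      ≤ ∑ i, (x i - xe i) * u i := by
  apply Finset.sum_le_sum
  intro i _
  unfold proj
  split_ifs with h
  · rcases h with ⟨hx0, hu⟩ | ⟨hx0, hu⟩
    · have : x i - xe i ≤ 0 := by have := (hxe i).1; linarith [hx0 ▸ this]
      nlinarith
    · have : 0 ≤ x i - xe i := by have := (hxe i).2; linarith [hx0 ▸ this]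
      nlinarith
  · exact le_refl _
end

section
/- Let n be a positive integer, let lo, hi ∈ ℝⁿ with lo ≤ hi componentwise, let x_e ∈ ℝⁿ satisfy lo ≤ x_e ≤ hi componentwise, and let u_e ∈ ℝⁿ be such that [u_{e,i}]_{x_{e,i} − lo_i}^{hi_i − x_{e,i}} = 0 for every i (i.e., x_e is an equilibrium of the projected dynamics with field value u_e). Then for every x ∈ ℝⁿ with lo ≤ x ≤ hi componentwise, ∑_{i=1}^n (x_i − x_{e,i}) · u_{e,i} ≤ 0. (Paper's Lemma 4, inequality (7b).) -/
/-- Lemma 4, inequality (7b): if `x_e` is an equilibrium of the projected dynamics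
with field value `u_e` (i.e. the projection of `u_e` at `x_e` vanishes componentwise),
then `∑ i (x i - x_e i) * u_e i ≤ 0` for all `x` in the box. -/
theorem stmt1 (n : ℕ) (hn : 0 < n) (lo hi xe ue : Fin n → ℝ)
    (hlohi : ∀ i, lo i ≤ hi i)
    (hxe : ∀ i, lo i ≤ xe i ∧ xe i ≤ hi i)
    (heq : ∀ i, proj (lo i) (hi i) (xe i) (ue i) = 0) :
    ∀ x : Fin n → ℝ, (∀ i, lo i ≤ x i ∧ x i ≤ hi i) →
      ∑ i, (x i - xe i) * ue i ≤ 0 := by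
  intro x hx
  apply Finset.sum_nonpos
  intro i _
  have h := heq i
  unfold proj at h
  split at h
  · rename_i hc
    rcases hc with ⟨hlo, hu⟩ | ⟨hhi, hu⟩
    · have : 0 ≤ x i - xe i := by linarith [(hx i).1, hlo ▸ le_refl (lo i)]
      exact mul_nonpos_of_nonneg_of_nonpos (by linarith [(hx i).1]) hu
    · exact mul_nonpos_of_nonpos_of_nonneg (by linarith [(hx i).2]) hu
  · simp [h]
end

section
/- Let n be a positive integer, let lo, hi ∈ ℝⁿ with lo ≤ hi componentwise, let x, x_e ∈ ℝⁿ satisfy lo ≤ x ≤ hi and lo ≤ x_e ≤ hi componentwise, and let u, u_e ∈ ℝⁿ be such that [u_{e,i}]_{x_{e,i} − lo_i}^{hi_i − x_{e,i}} = 0 for every i. Then ∑_{i=1}^n (x_i − x_{e,i}) · [u_i]_{x_i − lo_i}^{hi_i − x_i} ≤ ∑_{i=1}^n (x_i − x_{e,i}) · (u_i − u_{e,i}). (Combination of inequalities (7a) and (7b) of Lemma 4, as used in the Lyapunov derivative estimate (38) of Theorem 10.) -/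
lemma scalar_key (lo hi x xe u ue : ℝ) (hx : lo ≤ x ∧ x ≤ hi)
    (hxe : lo ≤ xe ∧ xe ≤ hi) (heq : proj lo hi xe ue = 0) :
    (x - xe) * proj lo hi x u ≤ (x - xe) * (u - ue) := by
  have h1 : (x - xe) * ue ≤ 0 := by
    unfold proj at heq
    split_ifs at heq with hc
    · rcases hc with ⟨he, hu⟩ | ⟨he, hu⟩ <;> subst he <;> nlinarith [hx.1, hx.2]
    · rw [heq]; ring_nf; rfl
  have h2 : (x - xe) * proj lo hi x u ≤ (x - xe) * u := by
    unfold proj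
    split_ifs with hc
    · rcases hc with ⟨he, hu⟩ | ⟨he, hu⟩ <;> subst he <;> nlinarith [hxe.1, hxe.2]
    · exact le_refl _
  nlinarith [h1, h2]

/-- Combination of inequalities (7a) and (7b) of Lemma 4, as used in the
Lyapunov derivative estimate (38) of Theorem 10. -/
theorem stmt2 (n : ℕ) (hn : 0 < n) (lo hi x xe u ue : Fin n → ℝ)
    (hlohi : ∀ i, lo i ≤ hi i)
    (hx : ∀ i, lo i ≤ x i ∧ x i ≤ hi i)
    (hxe : ∀ i, lo i ≤ xe i ∧ xe i ≤ hi i)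
    (heq : ∀ i, proj (lo i) (hi i) (xe i) (ue i) = 0) :
    ∑ i, (x i - xe i) * proj (lo i) (hi i) (x i) (u i)
      ≤ ∑ i, (x i - xe i) * (u i - ue i) := by
  exact Finset.sum_le_sum fun i _ => scalar_key _ _ _ _ _ _ (hx i) (hxe i) (heq i)
end

section
/- Let β > 0 and w̲ ≤ w̄ be real numbers, and let w : [0, ∞) → ℝ be differentiable with β·(w̲ − w(t)) ≤ w'(t) ≤ β·(w̄ − w(t)) for all t ≥ 0. If w(0) ∈ [w̲, w̄], then w(t) ∈ [w̲, w̄] for all t ≥ 0. (Forward invariance of the frequency safety interval, part (a) of Theorem 11, for trajectories satisfying the control barrier function conditions.) -/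
/-- Forward invariance of the frequency safety interval (part (a) of Theorem 11):
if the frequency trajectory satisfies the control barrier function differential
inequalities `β(w̲ − w(t)) ≤ w'(t) ≤ β(w̄ − w(t))` for all `t ≥ 0` and starts in
`[w̲, w̄]`, then it remains in `[w̲, w̄]` for all `t ≥ 0`. -/
theorem stmt10 (β wl wu : ℝ) (hβ : 0 < β) (hlu : wl ≤ wu)
    (w : ℝ → ℝ) (hdiff : Differentiable ℝ w)
    (hineq : ∀ t : ℝ, 0 ≤ t →
      β * (wl - w t) ≤ deriv w t ∧ deriv w t ≤ β * (wu - w t))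
    (h0 : w 0 ∈ Set.Icc wl wu) :
    ∀ t : ℝ, 0 ≤ t → w t ∈ Set.Icc wl wu := by
  have hexp : ∀ t : ℝ, HasDerivAt (fun s => Real.exp (β * s))
      (Real.exp (β * t) * β) t := by
    intro t
    exact ((hasDerivAt_id t).const_mul β).exp.congr_deriv (by simp)
  -- lower bound
  have hlow : ∀ t : ℝ, 0 ≤ t → wl ≤ w t := by
    intro t ht
    set f : ℝ → ℝ := fun s => Real.exp (β * s) * (w s - wl) with hf
    have hfd : ∀ s : ℝ, HasDerivAt f
        (Real.exp (β * s) * β * (w s - wl) + Real.exp (β * s) * deriv w s) s := by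
      intro s
      exact (hexp s).mul (((hdiff s).hasDerivAt).sub_const wl)
    have hmono : MonotoneOn f (Set.Ici (0 : ℝ)) := by
      apply monotoneOn_of_deriv_nonneg (convex_Ici 0)
      · exact (Continuous.mul (Real.continuous_exp.comp (continuous_const.mul continuous_id))
          ((hdiff.continuous).sub continuous_const)).continuousOn
      · intro s hs
        exact (hfd s).differentiableAt.differentiableWithinAt
      · intro s hs
        rw [interior_Ici] at hs
        rw [(hfd s).deriv]
        have h := (hineq s hs.le).1
        nlinarith [Real.exp_pos (β * s), mul_le_mul_of_nonneg_left h (Real.exp_pos (β*s)).le]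
    have h0f : 0 ≤ f 0 := by
      simp only [hf, mul_zero, Real.exp_zero, one_mul]
      linarith [h0.1]
    have := hmono (Set.self_mem_Ici) ht ht
    have hft : 0 ≤ f t := le_trans h0f this
    simp only [hf] at hft
    have hep := Real.exp_pos (β * t)
    nlinarith
  have hup : ∀ t : ℝ, 0 ≤ t → w t ≤ wu := by
    intro t ht
    set f : ℝ → ℝ := fun s => Real.exp (β * s) * (wu - w s) with hf
    have hfd : ∀ s : ℝ, HasDerivAt f
        (Real.exp (β * s) * β * (wu - w s) + Real.exp (β * s) * (0 - deriv w s)) s := by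
      intro s
      exact (hexp s).mul ((hasDerivAt_const s wu).sub ((hdiff s).hasDerivAt))
    have hmono : MonotoneOn f (Set.Ici (0 : ℝ)) := by
      apply monotoneOn_of_deriv_nonneg (convex_Ici 0)
      · exact (Continuous.mul (Real.continuous_exp.comp (continuous_const.mul continuous_id))
          (continuous_const.sub hdiff.continuous)).continuousOn
      · intro s hs
        exact (hfd s).differentiableAt.differentiableWithinAt
      · intro s hs
        rw [interior_Ici] at hs
        rw [(hfd s).deriv]
        have h := (hineq s hs.le).2
        nlinarith [Real.exp_pos (β * s), mul_le_mul_of_nonneg_left h (Real.exp_pos (β*s)).le]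
    have h0f : 0 ≤ f 0 := by
      simp only [hf, mul_zero, Real.exp_zero, one_mul]
      linarith [h0.2]
    have := hmono (Set.self_mem_Ici) ht ht
    have hft : 0 ≤ f t := le_trans h0f this
    simp only [hf] at hft
    have hep := Real.exp_pos (β * t)
    nlinarith
  exact fun t ht => ⟨hlow t ht, hup t ht⟩
end

section
/- Let N ≥ 1 and M ≥ 1 be integers, let F be a real N × M matrix each of whose columns sums to zero, let B be any real M × M matrix, let F̃ be a real (N−1) × M matrix, and let α ∈ ℝ^{N−1}. Let D_1, …, D_N > 0, let d, P^r, w ∈ ℝ^N with all components of w equal, and suppose P^r = d and P^r_i = D_i·w_i + d_i + (F B F̃ᵀ α)_i for every i ∈ {1, …, N}. Then w = 0 and F B F̃ᵀ α = 0. (Core of Lemma 9: at an equilibrium of the closed-loop system at which the safety corrector is inactive, all frequency deviations and all net tie-line powers vanish; the column-sum condition holds because F is the incidence matrix of the interconnection graph.) -/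
open Matrix

/-- Core of Lemma 9: at an equilibrium of the closed-loop system at which the
safety corrector is inactive, all frequency deviations and all net tie-line
powers vanish. Here `F` has zero column sums (it is the incidence matrix of the
interconnection graph), all components of `w` are equal (from `α̇ = Tw = 0`),
`P^r = d` (from `ξ̇ = 0`), and `P^r_i = D_i w_i + d_i + (F B F̃ᵀ α)_i`
(from `ẇ = 0`). -/
theorem stmt13 (N M : ℕ) (hN : 1 ≤ N) (hM : 1 ≤ M)
    (F : Matrix (Fin N) (Fin M) ℝ) (hF : ∀ j, ∑ i, F i j = 0)
    (B : Matrix (Fin M) (Fin M) ℝ) (Ft : Matrix (Fin (N - 1)) (Fin M) ℝ)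
    (α : Fin (N - 1) → ℝ) (D d Pr w : Fin N → ℝ)
    (hD : ∀ i, 0 < D i)
    (hw : ∀ i j, w i = w j)
    (hPr : Pr = d)
    (heq : ∀ i, Pr i = D i * w i + d i + ((F * B * Ft.transpose) *ᵥ α) i) :
    w = 0 ∧ (F * B * Ft.transpose) *ᵥ α = 0 := by
  set v := (F * B * Ft.transpose) *ᵥ α with hv
  -- each equation: D i * w i + v i = 0
  have heq' : ∀ i, D i * w i + v i = 0 := by
    intro i
    have := heq i
    rw [hPr] at this
    linarith
  -- sum of v is zero
  have hvsum : ∑ i, v i = 0 := by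
    have h1 : (fun _ : Fin N => (1 : ℝ)) ᵥ* F = 0 := by
      funext j
      simpa [Matrix.vecMul, dotProduct] using hF j
    have h2 : ∑ i, v i = ((fun _ : Fin N => (1 : ℝ)) ᵥ* (F * B * Ft.transpose)) ⬝ᵥ α := by
      rw [← Matrix.dotProduct_mulVec]
      simp [hv, dotProduct]
    rw [h2, Matrix.mul_assoc, ← Matrix.vecMul_vecMul, h1]
    simp
  -- sum the equations
  have hsum : ∑ i, D i * w i = 0 := by
    have h3 : ∑ i, (D i * w i + v i) = 0 := by
      simp [heq']
    rw [Finset.sum_add_distrib, hvsum, add_zero] at h3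
    exact h3
  obtain ⟨i0⟩ : Nonempty (Fin N) := ⟨⟨0, hN⟩⟩
  have hweq : ∀ i, w i = w i0 := fun i => hw i i0
  have hsum2 : (∑ i, D i) * w i0 = 0 := by
    rw [Finset.sum_mul]
    rw [← hsum]
    exact Finset.sum_congr rfl (fun i _ => by rw [hweq i])
  have hDpos : 0 < ∑ i, D i :=
    Finset.sum_pos (fun i _ => hD i) ⟨i0, Finset.mem_univ i0⟩
  have hw0 : w i0 = 0 := by
    rcases mul_eq_zero.mp hsum2 with h | h
    · exact absurd h (ne_of_gt hDpos)
    · exact h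
  have hwzero : w = 0 := funext fun i => by rw [hweq i, hw0]; rfl
  refine ⟨hwzero, funext fun i => ?_⟩
  have := heq' i
  rw [hwzero] at this
  simpa using this
end

section
/- Let N ≥ 2 and M_l ≥ 1 be integers. Let T = [I_{N−1}, −1_{N−1}] ∈ ℝ^{(N−1)×N} (the identity with an appended column of −1's), let F̃ ∈ ℝ^{(N−1)×M_l}, set F = Tᵀ F̃, and let B ∈ ℝ^{M_l×M_l} be symmetric. Let A, D ∈ ℝ^{N×N} be diagonal, and let b, d, P̲, P̄ ∈ ℝ^N with P̲ ≤ P̄ componentwise. Let α, α_e ∈ ℝ^{N−1}, w, P^r, P^r_e, ξ, ξ_e, P_g ∈ ℝ^N with P̲ ≤ P^r ≤ P̄ and P̲ ≤ P^r_e ≤ P̄ componentwise. Assume the equilibrium conditions: (i) P^r_e = d; (ii) F B F̃ᵀ α_e = 0; (iii) for each i, [−(A P^r_e)_i − b_i − ξ_{e,i}]_{P^r_{e,i} − P̲_i}^{P̄_i − P^r_{e,i}} = 0. Then, writing α̂ = α − α_e, P̂ = P^r − P^r_e, ξ̂ = ξ − ξ_e, the Lyapunov derivative expression satisfies: α̂ᵀ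 F̃ B F̃ᵀ (T w) + wᵀ(−D w + P_g − d − F B F̃ᵀ α) + ∑_{i=1}^N P̂_i · [−(A P^r)_i − b_i − ξ_i − w_i]_{P^r_i − P̲_i}^{P̄_i − P^r_i} + ξ̂ᵀ(P^r − d) ≤ −P̂ᵀ A P̂ − wᵀ D w + wᵀ(P_g − P^r). (Inequality (40) in the proof of Theorem 10, bounding the derivative of the Lyapunov function V along the closed-loop system.) -/
open Matrix

lemma proj_key (lo hi xe x ue u : ℝ) (hx1 : lo ≤ x) (hx2 : x ≤ hi)
    (hxe1 : lo ≤ xe) (hxe2 : xe ≤ hi) (he : proj lo hi xe ue = 0) :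
    (x - xe) * proj lo hi x u ≤ (x - xe) * (u - ue) := by
  have hB : (x - xe) * ue ≤ 0 := by
    unfold proj at he
    split at he
    · rename_i h
      rcases h with ⟨h, h'⟩ | ⟨h, h'⟩ <;> subst h <;> nlinarith
    · rw [he]; nlinarith
  have hA : (x - xe) * proj lo hi x u ≤ (x - xe) * u := by
    unfold proj
    split
    · rename_i h
      rcases h with ⟨h, h'⟩ | ⟨h, h'⟩ <;> subst h <;> nlinarith
    · exact le_refl _
  nlinarith


/-- Inequality (40) in the proof of Theorem 10, bounding the derivative of the
Lyapunov function `V` along the closed-loop system (26). Here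
`T = [I_{N−1}, −1_{N−1}]`, `F = Tᵀ F̃`, `B` is symmetric, `A` and `D` are the
diagonal matrices `diagonal Av` and `diagonal Dv`, and the equilibrium
conditions (i)–(iii) hold. -/
theorem stmt14 (N Ml : ℕ) (hN : 2 ≤ N) (hMl : 1 ≤ Ml)
    (T : Matrix (Fin (N - 1)) (Fin N) ℝ)
    (hT : ∀ i j, T i j =
      if (j : ℕ) = N - 1 then -1 else if (i : ℕ) = (j : ℕ) then 1 else 0)
    (Ft : Matrix (Fin (N - 1)) (Fin Ml) ℝ)
    (F : Matrix (Fin N) (Fin Ml) ℝ) (hF : F = T.transpose * Ft)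
    (B : Matrix (Fin Ml) (Fin Ml) ℝ) (hB : B.IsSymm)
    (Av Dv b d Pl Pu : Fin N → ℝ) (hPlu : ∀ i, Pl i ≤ Pu i)
    (α αe : Fin (N - 1) → ℝ)
    (w Pr Pre ξ ξe Pg : Fin N → ℝ)
    (hPr : ∀ i, Pl i ≤ Pr i ∧ Pr i ≤ Pu i)
    (hPre : ∀ i, Pl i ≤ Pre i ∧ Pre i ≤ Pu i)
    (h1 : Pre = d)
    (h2 : (F * B * Ft.transpose) *ᵥ αe = 0)
    (h3 : ∀ i, proj (Pl i) (Pu i) (Pre i)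
      (-((Matrix.diagonal Av *ᵥ Pre) i) - b i - ξe i) = 0) :
    (α - αe) ⬝ᵥ ((Ft * B * Ft.transpose) *ᵥ (T *ᵥ w))
      + w ⬝ᵥ (-(Matrix.diagonal Dv *ᵥ w) + Pg - d - (F * B * Ft.transpose) *ᵥ α)
      + (∑ i, (Pr i - Pre i) * proj (Pl i) (Pu i) (Pr i)
          (-((Matrix.diagonal Av *ᵥ Pr) i) - b i - ξ i - w i))
      + (ξ - ξe) ⬝ᵥ (Pr - d)
    ≤ -((Pr - Pre) ⬝ᵥ (Matrix.diagonal Av *ᵥ (Pr - Pre)))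
      - w ⬝ᵥ (Matrix.diagonal Dv *ᵥ w) + w ⬝ᵥ (Pg - Pr) := by
  subst h1
  set M := Ft * B * Ft.transpose with hM
  have hMs : M.transpose = M := by
    rw [hM, transpose_mul, transpose_mul, transpose_transpose, hB.eq, Matrix.mul_assoc]
  -- rewrite w ⬝ᵥ (F B Ftᵀ *ᵥ v) as (T *ᵥ w) ⬝ᵥ (M *ᵥ v)
  have hw : ∀ v : Fin (N-1) → ℝ, w ⬝ᵥ ((F * B * Ft.transpose) *ᵥ v)
      = (T *ᵥ w) ⬝ᵥ (M *ᵥ v) := by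
    intro v
    rw [hF, Matrix.mul_assoc, Matrix.mul_assoc, ← Matrix.mul_assoc Ft, ← hM,
      ← mulVec_mulVec, dotProduct_mulVec, vecMul_transpose]
  have hsym : ∀ (x : Fin (N-1) → ℝ) (y : Fin (N-1) → ℝ),
      x ⬝ᵥ (M *ᵥ y) = y ⬝ᵥ (M *ᵥ x) := by
    intro x y
    rw [dotProduct_mulVec, dotProduct_comm]
    congr 1
    rw [← hMs, vecMul_transpose, hMs]
  have e1 : (α - αe) ⬝ᵥ (M *ᵥ (T *ᵥ w)) = w ⬝ᵥ ((F * B * Ft.transpose) *ᵥ α) := by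
    rw [hsym, hw]
    have h2' : (T *ᵥ w) ⬝ᵥ (M *ᵥ αe) = 0 := by
      rw [← hw, h2, dotProduct_zero]
    rw [mulVec_sub, dotProduct_sub, h2', sub_zero]
  rw [e1, show -(Matrix.diagonal Dv *ᵥ w) + Pg - Pre - (F * B * Ft.transpose) *ᵥ α
      = (-(Matrix.diagonal Dv *ᵥ w) + Pg - Pre) - (F * B * Ft.transpose) *ᵥ α from rfl,
    dotProduct_sub]
  -- now purely diagonal / sum inequality
  have key : ∀ i, (Pr i - Pre i) * proj (Pl i) (Pu i) (Pr i)
        (-((Matrix.diagonal Av *ᵥ Pr) i) - b i - ξ i - w i)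
      ≤ (Pr i - Pre i) * ((-(Av i * Pr i) - b i - ξ i - w i)
          - (-(Av i * Pre i) - b i - ξe i)) := by
    intro i
    have := h3 i
    simp only [mulVec_diagonal] at this ⊢
    exact proj_key _ _ _ _ _ _ (hPr i).1 (hPr i).2 (hPre i).1 (hPre i).2 this
  have goal2 : w ⬝ᵥ (-(Matrix.diagonal Dv *ᵥ w) + Pg - Pre)
      + (∑ i, (Pr i - Pre i) * proj (Pl i) (Pu i) (Pr i)
          (-((Matrix.diagonal Av *ᵥ Pr) i) - b i - ξ i - w i))
      + (ξ - ξe) ⬝ᵥ (Pr - Pre)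
      ≤ -((Pr - Pre) ⬝ᵥ (Matrix.diagonal Av *ᵥ (Pr - Pre)))
      - w ⬝ᵥ (Matrix.diagonal Dv *ᵥ w) + w ⬝ᵥ (Pg - Pr) := by
    simp only [dotProduct, mulVec_diagonal, Pi.add_apply, Pi.sub_apply, Pi.neg_apply]
    rw [← Finset.sum_add_distrib, ← Finset.sum_add_distrib, ← Finset.sum_neg_distrib,
      ← Finset.sum_sub_distrib, ← Finset.sum_add_distrib]
    refine Finset.sum_le_sum fun i _ => ?_
    have hk := key i
    simp only [mulVec_diagonal] at hk
    nlinarith [hk]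
  linarith [goal2]
end
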